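/- arXiv:2307.04024 — 3 statements merged into one kernel-verified Lean document; each statement's English description precedes it below -/
import Mathlib

section
/- Lower bound of thickness: if h(·,i,j) : ℝⁿ → ℝ is differentiable with gradient H(y)_i − H(y)_j satisfying ‖H(y)_i − H(y)_j‖₂ ≤ C for all y ∈ B₂(x,ε), and D is supported on B₂(x,ε), then Θ(f,x,D,i,j) = E_{x'∼D}[∫₀¹ h(x(t),i,j) dt] ≥ h(x,i,j) − (ε/2)·C. -/
/-!
Along the segment `t ↦ (1 - t) • x + t • x'` to a point `x'` of the ball, the mean value
inequality gives `h ((1 - t) • x + t • x') ≥ h x - C t ε`; integrating over `t ∈ [0, 1]` loses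
`ε C / 2`, and averaging over `x' ∼ μ` preserves the bound.
-/

open MeasureTheory Metric Set

section Segment

variable {E : Type*} [NormedAddCommGroup E] [NormedSpace ℝ E]

lemma segment_mem_closedBall {x x' : E} {ε t : ℝ} (hx' : x' ∈ closedBall x ε)
    (ht : t ∈ Icc (0 : ℝ) 1) : (1 - t) • x + t • x' ∈ closedBall x ε :=
  convex_closedBall x ε (mem_closedBall_self (nonempty_closedBall.1 ⟨x', hx'⟩)) hx'
    (by linarith [ht.2]) ht.1 (by ring)

lemma norm_image_segment_sub_le {F : Type*} [NormedAddCommGroup F] [NormedSpace ℝ F]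
    {f : E → F} {x x' : E} {ε C t : ℝ}
    (hf : ∀ y ∈ closedBall x ε, DifferentiableAt ℝ f y)
    (hC : ∀ y ∈ closedBall x ε, ‖fderiv ℝ f y‖ ≤ C)
    (hx' : x' ∈ closedBall x ε) (ht : t ∈ Icc (0 : ℝ) 1) :
    ‖f ((1 - t) • x + t • x') - f x‖ ≤ C * (t * ε) := by
  have hx : x ∈ closedBall x ε := mem_closedBall_self (nonempty_closedBall.1 ⟨x', hx'⟩)
  have hC0 : 0 ≤ C := (norm_nonneg _).trans (hC x hx)
  have hdist : ‖(1 - t) • x + t • x' - x‖ = t * ‖x' - x‖ := by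
    rw [show (1 - t) • x + t • x' - x = t • (x' - x) by module, norm_smul,
      Real.norm_of_nonneg ht.1]
  calc ‖f ((1 - t) • x + t • x') - f x‖ ≤ C * ‖(1 - t) • x + t • x' - x‖ :=
        (convex_closedBall x ε).norm_image_sub_le_of_norm_fderiv_le hf hC hx
          (segment_mem_closedBall hx' ht)
    _ ≤ C * (t * ε) := by
        rw [hdist]
        exact mul_le_mul_of_nonneg_left
          (mul_le_mul_of_nonneg_left (mem_closedBall_iff_norm.1 hx') ht.1) hC0

lemma sub_le_intervalIntegral_segment {f : E → ℝ} {x x' : E} {ε C : ℝ}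
    (hf : ∀ y ∈ closedBall x ε, DifferentiableAt ℝ f y)
    (hC : ∀ y ∈ closedBall x ε, ‖fderiv ℝ f y‖ ≤ C) (hx' : x' ∈ closedBall x ε) :
    f x - ε / 2 * C ≤ ∫ t in (0 : ℝ)..1, f ((1 - t) • x + t • x') := by
  have hsegment : ContinuousOn (fun t : ℝ ↦ f ((1 - t) • x + t • x')) (Icc 0 1) :=
    (continuousOn_of_forall_continuousAt fun y hy ↦ (hf y hy).continuousAt).comp
      (by fun_prop) fun t ht ↦ segment_mem_closedBall hx' ht
  have hlower : ∀ t ∈ Icc (0 : ℝ) 1, f x - C * (t * ε) ≤ f ((1 - t) • x + t • x') := by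
    intro t ht
    have := norm_image_segment_sub_le hf hC hx' ht
    rw [Real.norm_eq_abs, abs_le] at this
    linarith [this.1]
  calc f x - ε / 2 * C = ∫ t in (0 : ℝ)..1, (f x - C * (t * ε)) := by
        simp only [intervalIntegral.integral_sub intervalIntegrable_const
          ((by fun_prop : Continuous fun t : ℝ ↦ C * (t * ε)).intervalIntegrable 0 1),
          intervalIntegral.integral_const_mul, intervalIntegral.integral_mul_const, integral_id,
          intervalIntegral.integral_const]
        ring
    _ ≤ ∫ t in (0 : ℝ)..1, f ((1 - t) • x + t • x') :=
        intervalIntegral.integral_mono_on zero_le_one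
          ((by fun_prop : Continuous fun t : ℝ ↦ f x - C * (t * ε)).intervalIntegrable 0 1)
          (hsegment.intervalIntegrable_of_Icc zero_le_one) hlower

lemma continuous_intervalIntegral_segment {F : Type*} [NormedAddCommGroup F] [NormedSpace ℝ F]
    {f : E → F} (hf : Continuous f) (x : E) :
    Continuous fun x' ↦ ∫ t in (0 : ℝ)..1, f ((1 - t) • x + t • x') :=
  intervalIntegral.continuous_parametric_intervalIntegral_of_continuous'
    (f := fun x' t ↦ f ((1 - t) • x + t • x')) (by fun_prop) 0 1

end Segment

/-- Lower bound of thickness: if the gradient of h has norm ≤ C on B₂(x,ε) and D is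
supported on B₂(x,ε), then Θ = E_{x'∼D}[∫₀¹ h(x(t)) dt] ≥ h(x) − (ε/2)·C. -/
theorem stmt3 {n : ℕ} (h : EuclideanSpace ℝ (Fin n) → ℝ)
    (x : EuclideanSpace ℝ (Fin n)) (ε C : ℝ)
    (μ : Measure (EuclideanSpace ℝ (Fin n))) [IsProbabilityMeasure μ]
    (hd : Differentiable ℝ h)
    (hC : ∀ y ∈ Metric.closedBall x ε, ‖fderiv ℝ h y‖ ≤ C)
    (hsupp : ∀ᵐ x' ∂μ, x' ∈ Metric.closedBall x ε) :
    h x - ε / 2 * C ≤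
      ∫ x', (∫ t in (0:ℝ)..1, h ((1 - t) • x + t • x')) ∂μ := by
  have hint : Integrable (fun x' ↦ ∫ t in (0 : ℝ)..1, h ((1 - t) • x + t • x')) μ := by
    rw [← Measure.restrict_eq_self_of_ae_mem hsupp]
    exact (continuous_intervalIntegral_segment hd.continuous x).continuousOn.integrableOn_compact
      (isCompact_closedBall x ε)
  calc h x - ε / 2 * C = ∫ _, (h x - ε / 2 * C) ∂μ := by simp
    _ ≤ _ := integral_mono_ae (integrable_const _) hint <| hsupp.mono fun x' hx' ↦
        sub_le_intervalIntegral_segment (fun y _ ↦ hd y) hC hx'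
end

section
/- Sandwich bound: under the assumptions that ‖∇h(y,i,j)‖₂ ≤ C and ‖H(y)_i‖₂ ≤ L_i, ‖H(y)_j‖₂ ≤ L_j on B₂(x,ε), and D supported on B₂(x,ε), the relaxed thickness satisfies h(x,i,j) − εC/2 ≤ Θ(f,x,D,i,j) ≤ h(x,i,j) + ε(L_i+L_j). -/
open MeasureTheory

/-- Sandwich bound: with ‖∇h(y)‖ ≤ C, ‖H(y)_i‖ ≤ Lᵢ, ‖H(y)_j‖ ≤ Lⱼ on B₂(x,ε) and D
supported on B₂(x,ε), the relaxed thickness satisfies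
h(x) − εC/2 ≤ Θ ≤ h(x) + ε(Lᵢ+Lⱼ), where h = Iᵢ − Iⱼ. -/
theorem stmt7 {n : ℕ} (Ii Ij : EuclideanSpace ℝ (Fin n) → ℝ)
    (x : EuclideanSpace ℝ (Fin n)) (ε C Li Lj : ℝ)
    (μ : Measure (EuclideanSpace ℝ (Fin n))) [IsProbabilityMeasure μ]
    (hdi : Differentiable ℝ Ii) (hdj : Differentiable ℝ Ij)
    (hC : ∀ y ∈ Metric.closedBall x ε,
      ‖fderiv ℝ (fun z => Ii z - Ij z) y‖ ≤ C)
    (hLi : ∀ y ∈ Metric.closedBall x ε, ‖fderiv ℝ Ii y‖ ≤ Li)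
    (hLj : ∀ y ∈ Metric.closedBall x ε, ‖fderiv ℝ Ij y‖ ≤ Lj)
    (hsupp : ∀ᵐ x' ∂μ, x' ∈ Metric.closedBall x ε) :
    (Ii x - Ij x) - ε * C / 2 ≤
      (∫ x', (∫ t in (0:ℝ)..1,
        Ii ((1 - t) • x + t • x') - Ij ((1 - t) • x + t • x')) ∂μ) ∧
    (∫ x', (∫ t in (0:ℝ)..1,
        Ii ((1 - t) • x + t • x') - Ij ((1 - t) • x + t • x')) ∂μ)
      ≤ (Ii x - Ij x) + ε * (Li + Lj) := by
  set g : EuclideanSpace ℝ (Fin n) → ℝ := fun z => Ii z - Ij z with hg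
  have hdg : Differentiable ℝ g := hdi.sub hdj
  have hcg : Continuous g := hdg.continuous
  -- basic positivity facts
  have hμne : μ ≠ 0 := IsProbabilityMeasure.ne_zero μ
  have : Filter.NeBot (ae μ) := ae_neBot.mpr hμne
  obtain ⟨x₀, hx₀⟩ := hsupp.exists
  have hε : 0 ≤ ε := le_trans dist_nonneg (Metric.mem_closedBall.mp hx₀)
  have hxmem : x ∈ Metric.closedBall x ε := Metric.mem_closedBall_self hε
  have hC0 : 0 ≤ C := le_trans (norm_nonneg _) (hC x hxmem)
  have hLi0 : 0 ≤ Li := le_trans (norm_nonneg _) (hLi x hxmem)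
  have hLj0 : 0 ≤ Lj := le_trans (norm_nonneg _) (hLj x hxmem)
  have hconv : Convex ℝ (Metric.closedBall x ε) := convex_closedBall x ε
  -- MVT bound with constant C
  have key : ∀ K : ℝ, (∀ y ∈ Metric.closedBall x ε, ‖fderiv ℝ g y‖ ≤ K) →
      ∀ x' ∈ Metric.closedBall x ε, ∀ t ∈ Set.Icc (0:ℝ) 1,
      |g ((1 - t) • x + t • x') - g x| ≤ K * ε * t := by
    intro K hK x' hx' t ht
    have hmem : (1 - t) • x + t • x' ∈ Metric.closedBall x ε := by
      have := hconv hxmem hx' (by linarith [ht.2] : (0:ℝ) ≤ 1 - t) ht.1 (by ring)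
      simpa using this
    have := hconv.norm_image_sub_le_of_norm_fderiv_le
      (fun y _ => hdg.differentiableAt) hK hxmem hmem
    have heq : (1 - t) • x + t • x' - x = t • (x' - x) := by
      rw [sub_smul, one_smul, smul_sub]; abel
    rw [Real.norm_eq_abs] at this
    calc |g ((1 - t) • x + t • x') - g x| ≤ K * ‖(1 - t) • x + t • x' - x‖ := this
      _ = K * (t * ‖x' - x‖) := by rw [heq, norm_smul, Real.norm_eq_abs, abs_of_nonneg ht.1]
      _ ≤ K * (t * ε) := by
        have hK0 : 0 ≤ K := le_trans (norm_nonneg _) (hK x hxmem)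
        have : ‖x' - x‖ ≤ ε := by
          rw [← dist_eq_norm]; exact Metric.mem_closedBall.mp hx'
        exact mul_le_mul_of_nonneg_left (mul_le_mul_of_nonneg_left this ht.1) hK0
      _ = K * ε * t := by ring
  have hKLL : ∀ y ∈ Metric.closedBall x ε, ‖fderiv ℝ g y‖ ≤ Li + Lj := by
    intro y hy
    have : fderiv ℝ g y = fderiv ℝ Ii y - fderiv ℝ Ij y :=
      fderiv_sub hdi.differentiableAt hdj.differentiableAt
    rw [this]
    exact le_trans (norm_sub_le _ _) (add_le_add (hLi y hy) (hLj y hy))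
  -- continuity of the inner integral
  have hcont : Continuous fun x' => ∫ t in (0:ℝ)..1, g ((1 - t) • x + t • x') := by
    apply intervalIntegral.continuous_parametric_intervalIntegral_of_continuous'
    exact hcg.comp (((continuous_const.sub continuous_snd).smul continuous_const).add
      (continuous_snd.smul continuous_fst))
  -- pointwise bounds on the inner integral
  have hinner : ∀ x' ∈ Metric.closedBall x ε,
      g x - C * ε / 2 ≤ (∫ t in (0:ℝ)..1, g ((1 - t) • x + t • x')) ∧
      (∫ t in (0:ℝ)..1, g ((1 - t) • x + t • x')) ≤ g x + (Li + Lj) * ε / 2 := by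
    intro x' hx'
    have hcont1 : Continuous fun t : ℝ => g ((1 - t) • x + t • x') := by
      apply hcg.comp
      exact ((continuous_const.sub continuous_id).smul continuous_const).add
        (continuous_id.smul continuous_const)
    have hii : IntervalIntegrable (fun t : ℝ => g ((1 - t) • x + t • x'))
        volume 0 1 := hcont1.intervalIntegrable 0 1
    constructor
    · have hmono : ∀ t ∈ Set.Icc (0:ℝ) 1, g x - C * ε * t ≤ g ((1 - t) • x + t • x') := by
        intro t ht
        have := key C hC x' hx' t ht
        linarith [abs_le.mp this |>.1]
      have := intervalIntegral.integral_mono_on (le_of_lt one_pos)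
        ((continuous_const.sub (continuous_const.mul continuous_id')).intervalIntegrable 0 1)
        hii hmono
      have hcomp : (∫ t in (0:ℝ)..1, (g x - C * ε * t)) = g x - C * ε / 2 := by
        rw [intervalIntegral.integral_sub (g := fun t : ℝ => C * ε * t) (intervalIntegrable_const)
          ((continuous_const.mul continuous_id').intervalIntegrable 0 1 :
            IntervalIntegrable (fun t : ℝ => C * ε * t) volume 0 1)]
        rw [intervalIntegral.integral_const, intervalIntegral.integral_const_mul, integral_id]
        norm_num
        try ring
      linarith [hcomp ▸ this]
    · have hmono : ∀ t ∈ Set.Icc (0:ℝ) 1, g ((1 - t) • x + t • x') ≤ g x + (Li + Lj) * ε * t := by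
        intro t ht
        have := key (Li + Lj) hKLL x' hx' t ht
        linarith [abs_le.mp this |>.2]
      have := intervalIntegral.integral_mono_on (le_of_lt one_pos) hii
        ((continuous_const.add (continuous_const.mul continuous_id')).intervalIntegrable 0 1) hmono
      have hcomp : (∫ t in (0:ℝ)..1, (g x + (Li + Lj) * ε * t)) = g x + (Li + Lj) * ε / 2 := by
        rw [intervalIntegral.integral_add (g := fun t : ℝ => (Li + Lj) * ε * t) (intervalIntegrable_const)
          ((continuous_const.mul continuous_id').intervalIntegrable 0 1 :
            IntervalIntegrable (fun t : ℝ => (Li + Lj) * ε * t) volume 0 1)]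
        rw [intervalIntegral.integral_const, intervalIntegral.integral_const_mul, integral_id]
        norm_num
        try ring
      linarith [hcomp ▸ this]
  -- integrability of the inner integral function
  set F : EuclideanSpace ℝ (Fin n) → ℝ :=
    fun x' => ∫ t in (0:ℝ)..1, g ((1 - t) • x + t • x') with hF
  have hbd : ∀ᵐ x' ∂μ, ‖F x'‖ ≤ |g x| + C * ε / 2 + (Li + Lj) * ε / 2 := by
    filter_upwards [hsupp] with x' hx'
    obtain ⟨h1, h2⟩ := hinner x' hx'
    rw [Real.norm_eq_abs, abs_le]
    simp only [hF]
    have hc2 : 0 ≤ C * ε / 2 := div_nonneg (mul_nonneg hC0 hε) (by norm_num : (0:ℝ) ≤ 2)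
    have hl2 : 0 ≤ (Li + Lj) * ε / 2 := div_nonneg (mul_nonneg (add_nonneg hLi0 hLj0) hε) (by norm_num : (0:ℝ) ≤ 2)
    refine ⟨le_trans ?_ h1, le_trans h2 ?_⟩ <;>
    · generalize g x = a
      rcases abs_cases a with ⟨h, h'⟩ | ⟨h, h'⟩ <;> rw [h] <;> linarith only [hc2, hl2, h']
  have hint : Integrable F μ :=
    (integrable_const _).mono' hcont.aestronglyMeasurable hbd
  have hle1 : (∫ x', F x' ∂μ) ≥ g x - C * ε / 2 := by
    have := integral_mono_ae (integrable_const (g x - C * ε / 2)) hint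
      (by filter_upwards [hsupp] with x' hx'; exact (hinner x' hx').1)
    simpa using this
  have hle2 : (∫ x', F x' ∂μ) ≤ g x + (Li + Lj) * ε / 2 := by
    have := integral_mono_ae hint (integrable_const (g x + (Li + Lj) * ε / 2))
      (by filter_upwards [hsupp] with x' hx'; exact (hinner x' hx').2)
    simpa using this
  constructor
  · calc (Ii x - Ij x) - ε * C / 2 = g x - C * ε / 2 := by simp only [hg]; ring
      _ ≤ ∫ x', F x' ∂μ := hle1
  · calc (∫ x', F x' ∂μ) ≤ g x + (Li + Lj) * ε / 2 := hle2
      _ ≤ (Ii x - Ij x) + ε * (Li + Lj) := by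
        have : (Li + Lj) * ε / 2 ≤ ε * (Li + Lj) := by nlinarith [mul_nonneg (add_nonneg hLi0 hLj0) hε]
        simp only [hg]; linarith
end

section
/- If h(x,i,j) > ε·max_{y∈B₂(x,ε)}‖H(y)_i − H(y)_j‖₂ / 2, then the relaxed thickness Θ(f,x,D,i,j) is strictly positive for any distribution D supported on B₂(x,ε). -/
open MeasureTheory

/-- If h(x) > ε·C/2 where C bounds ‖∇h‖ on B₂(x,ε), then the relaxed thickness is
strictly positive for any distribution D supported on B₂(x,ε). -/
theorem stmt10 {n : ℕ} (h : EuclideanSpace ℝ (Fin n) → ℝ)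
    (x : EuclideanSpace ℝ (Fin n)) (ε C : ℝ)
    (μ : Measure (EuclideanSpace ℝ (Fin n))) [IsProbabilityMeasure μ]
    (hd : Differentiable ℝ h)
    (hC : ∀ y ∈ Metric.closedBall x ε, ‖fderiv ℝ h y‖ ≤ C)
    (hsupp : ∀ᵐ x' ∂μ, x' ∈ Metric.closedBall x ε)
    (hgap : ε * C / 2 < h x) :
    0 < ∫ x', (∫ t in (0:ℝ)..1, h ((1 - t) • x + t • x')) ∂μ := by
  -- dispose of the degenerate case ε < 0
  rcases lt_or_ge ε 0 with hε | hε
  · exfalso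
    rw [Metric.closedBall_eq_empty.2 hε] at hsupp
    simp only [Set.mem_empty_iff_false] at hsupp
    have hμ0 : μ = 0 := by simpa using hsupp
    exact (IsProbabilityMeasure.ne_zero μ) hμ0
  have hxball : x ∈ Metric.closedBall x ε := Metric.mem_closedBall_self hε
  have hC0 : 0 ≤ C := le_trans (norm_nonneg _) (hC x hxball)
  -- membership of segment points in the ball
  have hmem : ∀ x' ∈ Metric.closedBall x ε, ∀ t ∈ Set.Icc (0:ℝ) 1,
      (1 - t) • x + t • x' ∈ Metric.closedBall x ε := by
    intro x' hx' t ht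
    have : (1 - t) • x + t • x' = x + t • (x' - x) := by
      simp [sub_smul, smul_sub]; abel
    rw [this, Metric.mem_closedBall, dist_eq_norm]
    have : x + t • (x' - x) - x = t • (x' - x) := by abel
    rw [this, norm_smul]
    calc ‖t‖ * ‖x' - x‖ ≤ 1 * ε := by
          apply mul_le_mul
          · rw [Real.norm_eq_abs, abs_of_nonneg ht.1]; exact ht.2
          · rw [← dist_eq_norm]; exact Metric.mem_closedBall.1 hx'
          · exact norm_nonneg _
          · norm_num
      _ = ε := one_mul ε
  -- Lipschitz estimate on the ball
  have hlip : ∀ y ∈ Metric.closedBall x ε, ∀ z ∈ Metric.closedBall x ε,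
      ‖h y - h z‖ ≤ C * ‖y - z‖ := by
    intro y hy z hz
    exact (convex_closedBall x ε).norm_image_sub_le_of_norm_fderiv_le
      (fun p _ => hd p) hC hz hy
  -- pointwise lower bound on the inner integrand
  have hpt : ∀ x' ∈ Metric.closedBall x ε, ∀ t ∈ Set.Icc (0:ℝ) 1,
      h x - C * ε * t ≤ h ((1 - t) • x + t • x') := by
    intro x' hx' t ht
    have hm := hmem x' hx' t ht
    have := hlip _ hm x hxball
    have hnorm : ‖(1 - t) • x + t • x' - x‖ ≤ t * ε := by
      have he : (1 - t) • x + t • x' - x = t • (x' - x) := by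
        simp [sub_smul, smul_sub]; abel
      rw [he, norm_smul, Real.norm_eq_abs, abs_of_nonneg ht.1]
      exact mul_le_mul_of_nonneg_left
        (by rw [← dist_eq_norm]; exact Metric.mem_closedBall.1 hx') ht.1
    have habs : |h ((1 - t) • x + t • x') - h x| ≤ C * (t * ε) :=
      le_trans this (mul_le_mul_of_nonneg_left hnorm hC0)
    have := abs_le.1 habs
    nlinarith [this.1]
  -- continuity of the inner integrand in t
  have hcont : ∀ x' : EuclideanSpace ℝ (Fin n),
      Continuous fun t : ℝ => h ((1 - t) • x + t • x') := fun x' =>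
    hd.continuous.comp (by continuity)
  set δ : ℝ := h x - ε * C / 2 with hδdef
  have hδpos : 0 < δ := by simp [hδdef]; linarith
  -- lower bound on the inner integral
  have hinner : ∀ x' ∈ Metric.closedBall x ε,
      δ ≤ ∫ t in (0:ℝ)..1, h ((1 - t) • x + t • x') := by
    intro x' hx'
    have hi1 : IntervalIntegrable (fun t => h x - C * ε * t) volume 0 1 :=
      ((continuous_const.sub (continuous_const.mul continuous_id)) :
        Continuous fun t : ℝ => h x - C * ε * t).intervalIntegrable 0 1
    have hi2 : IntervalIntegrable (fun t => h ((1 - t) • x + t • x')) volume 0 1 :=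
      (hcont x').intervalIntegrable 0 1
    have hmono := intervalIntegral.integral_mono_on (by norm_num) hi1 hi2
      (fun t ht => hpt x' hx' t ht)
    have hcalc : (∫ t in (0:ℝ)..1, (h x - C * ε * t)) = δ := by
      rw [intervalIntegral.integral_sub (f := fun _ => h x) (g := fun t : ℝ => C * ε * t) (intervalIntegrable_const)
        (((continuous_const.mul continuous_id) :
          Continuous fun t : ℝ => C * ε * t).intervalIntegrable 0 1)]
      rw [intervalIntegral.integral_const_mul, integral_id]
      simp [hδdef]; ring
    rw [hcalc] at hmono
    exact hmono
  -- upper bound for integrability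
  have hupper : ∀ x' ∈ Metric.closedBall x ε,
      ‖∫ t in (0:ℝ)..1, h ((1 - t) • x + t • x')‖ ≤ |h x| + C * ε := by
    intro x' hx'
    have := intervalIntegral.norm_integral_le_of_norm_le_const
      (a := (0:ℝ)) (b := 1) (C := |h x| + C * ε)
      (f := fun t => h ((1 - t) • x + t • x')) ?_
    · simpa using this
    · intro t ht
      rw [Set.uIoc_of_le (by norm_num : (0:ℝ) ≤ 1)] at ht
      have ht' : t ∈ Set.Icc (0:ℝ) 1 := ⟨le_of_lt ht.1, ht.2⟩
      have hm := hmem x' hx' t ht'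
      have := hlip _ hm x hxball
      have hnorm : ‖(1 - t) • x + t • x' - x‖ ≤ ε := by
        rw [← dist_eq_norm]; exact Metric.mem_closedBall.1 hm
      calc ‖h ((1 - t) • x + t • x')‖
          ≤ ‖h x‖ + ‖h ((1 - t) • x + t • x') - h x‖ :=
            norm_le_norm_add_norm_sub' _ _
        _ ≤ |h x| + C * ε := by
            refine add_le_add (le_of_eq (Real.norm_eq_abs _)) (le_trans this ?_)
            exact mul_le_mul_of_nonneg_left hnorm hC0
  -- the outer integrand is continuous, hence strongly measurable
  have hFcont : Continuous fun x' : EuclideanSpace ℝ (Fin n) =>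
      ∫ t in (0:ℝ)..1, h ((1 - t) • x + t • x') := by
    apply intervalIntegral.continuous_parametric_intervalIntegral_of_continuous'
    exact hd.continuous.comp
      (((continuous_const.sub continuous_snd).smul continuous_const).add
        (continuous_snd.smul continuous_fst))
  -- integrability of the outer integrand
  have hFint : Integrable (fun x' => ∫ t in (0:ℝ)..1, h ((1 - t) • x + t • x')) μ := by
    refine Integrable.mono' (integrable_const (|h x| + C * ε))
      hFcont.aestronglyMeasurable ?_
    filter_upwards [hsupp] with x' hx' using hupper x' hx'
  have hge : δ ≤ ∫ x', (∫ t in (0:ℝ)..1, h ((1 - t) • x + t • x')) ∂μ := by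
    have := integral_mono_ae (integrable_const δ) hFint
      (by filter_upwards [hsupp] with x' hx' using hinner x' hx')
    simpa [integral_const, measure_univ] using this
  linarith
end
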